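/- Let φ : [E] → [E'] be an 𝔽₂-linear isomorphism with φ([E]_c) = [E']_c. For each cell T of (E,R), there is a unique cell T' of (E',R') with φ([T]) = [T'], and the induced map T ↦ T' is a bijection from the cells of (E,R) to the cells of (E',R') satisfying: T ∪ U is commutative iff T' ∪ U' is commutative. -/
import Mathlib


/-- The commutant of a subset `X` with respect to a binary relation `R`. -/
def Cop {E : Type*} (R : E → E → Prop) (X : Set E) : Set E := {y | ∀ x ∈ X, R y x}

/-- A subset is commutative if any two of its elements are related by `R`. -/
def CommSet {E : Type*} (R : E → E → Prop) (A : Set E) : Prop := ∀ x ∈ A, ∀ y ∈ A, R x y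

/-- `[E]_c` : the set of elements of `[E]` whose support is commutative. -/
def commc {E : Type*} (R : E → E → Prop) : Set (E →₀ ZMod 2) :=
  {v | CommSet R ↑v.support}

/-- `[T]` : the set of elements of `[E]` supported in `T`. -/
def subOf {E : Type*} (T : Set E) : Set (E →₀ ZMod 2) := {v | ↑v.support ⊆ T}

/-- The set of cells of `(E, R)`. -/
def cells {E : Type*} (R : E → E → Prop) : Set (Set E) :=
  {T | ∃ x : E, T = Cop R (Cop R {x})}

section Basic
variable {E : Type*} {R : E → E → Prop}

lemma commSet_mono {A B : Set E} (h : A ⊆ B) (hB : CommSet R B) : CommSet R A :=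
  fun x hx y hy => hB x (h hx) y (h hy)

lemma subset_copcop (hsymm : Symmetric R) (Y : Set E) : Y ⊆ Cop R (Cop R Y) :=
  fun y hy z hz => hsymm (hz y hy)

lemma cop_anti {A B : Set E} (h : A ⊆ B) : Cop R B ⊆ Cop R A :=
  fun y hy x hx => hy x (h hx)

lemma copcop_mono {A B : Set E} (h : A ⊆ B) : Cop R (Cop R A) ⊆ Cop R (Cop R B) :=
  cop_anti (cop_anti h)

lemma copcopcop (hsymm : Symmetric R) (Y : Set E) : Cop R (Cop R (Cop R Y)) = Cop R Y :=
  Set.Subset.antisymm (cop_anti (subset_copcop hsymm Y)) (subset_copcop hsymm _)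

lemma copcop_comm {Y : Set E} (hY : CommSet R Y) : CommSet R (Cop R (Cop R Y)) := by
  intro a ha b hb
  exact ha b (fun y hy => hb y (hY y hy))

lemma mem_support_add_left {v w : E →₀ ZMod 2} {x : E}
    (hv : x ∈ v.support) (hw : x ∉ w.support) : x ∈ (v + w).support := by
  rw [Finsupp.mem_support_iff] at hv ⊢
  rw [Finsupp.add_apply, Finsupp.notMem_support_iff.mp hw, add_zero]
  exact hv

def Comm3 (R : E → E → Prop) (v w : E →₀ ZMod 2) : Prop :=
  v ∈ commc R ∧ w ∈ commc R ∧ v + w ∈ commc R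

lemma comm3_iff (hsymm : Symmetric R) {v w : E →₀ ZMod 2} :
    Comm3 R v w ↔ CommSet R (↑v.support ∪ ↑w.support) := by
  constructor
  · rintro ⟨hv, hw, hvw⟩
    have key : ∀ a b : E, a ∈ v.support → b ∈ w.support → R a b := by
      intro a b ha hb
      by_cases hab : a ∈ w.support
      · exact hw a hab b hb
      by_cases hba : b ∈ v.support
      · exact hv a ha b hba
      · exact hvw a (mem_support_add_left ha hab) b
          (by rw [add_comm]; exact mem_support_add_left hb hba)
    rintro x (hx | hx) y (hy | hy)
    · exact hv x hx y hy
    · exact key x y hx hy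
    · exact hsymm (key y x hy hx)
    · exact hw x hx y hy
  · intro h
    refine ⟨commSet_mono Set.subset_union_left h,
            commSet_mono Set.subset_union_right h,
            commSet_mono ?_ h⟩
    intro a ha
    classical
    have := Finsupp.support_add (g₁ := v) (g₂ := w) (by simpa using ha)
    simpa using this

lemma single_mem_commc (hrefl : Reflexive R) (z : E) (c : ZMod 2) :
    Finsupp.single z c ∈ commc R := by
  intro a ha b hb
  have hs : ↑(Finsupp.single z c).support ⊆ ({z} : Set E) := by
    intro t ht
    simp only [Finset.mem_coe] at ht
    have := Finsupp.support_single_subset (a := z) (b := c) ht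
    simpa using this
  have ha' := hs ha
  have hb' := hs hb
  simp only [Set.mem_singleton_iff] at ha' hb'
  subst ha'; subst hb'
  exact hrefl _

/-- The key characterization of `[Cop²(supp u)]` in terms of `Comm3`. -/
lemma memClosureIff14 (hsymm : Symmetric R) (hrefl : Reflexive R)
    {u : E →₀ ZMod 2} (hu : u ∈ commc R) (v : E →₀ ZMod 2) :
    v ∈ subOf (Cop R (Cop R ↑u.support)) ↔
      v ∈ commc R ∧ ∀ w, Comm3 R u w → Comm3 R v w := by
  constructor
  · intro hv
    have hvc : v ∈ commc R := commSet_mono hv (copcop_comm hu)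
    refine ⟨hvc, fun w h3 => ?_⟩
    rw [comm3_iff hsymm] at h3 ⊢
    rintro x (hx | hx) y (hy | hy)
    · exact hvc x hx y hy
    · -- x ∈ supp v ⊆ copcop(supp u), y ∈ supp w ⊆ cop(supp u)
      exact hv hx y (fun z hz => hsymm (h3 z (Or.inl hz) y (Or.inr hy)))
    · exact hsymm (hv hy x (fun z hz => hsymm (h3 z (Or.inl hz) x (Or.inr hx))))
    · exact h3 x (Or.inr hx) y (Or.inr hy)
  · rintro ⟨hvc, hw⟩ a ha z hz
    -- a ∈ supp v, z ∈ Cop (supp u); show R a z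
    have h3 : Comm3 R u (Finsupp.single z 1) := by
      rw [comm3_iff hsymm]
      have hs : ↑(Finsupp.single z (1 : ZMod 2)).support = ({z} : Set E) := by
        rw [Finsupp.support_single_ne_zero z one_ne_zero]; simp
      rw [hs]
      rintro x (hx | hx) y (hy | hy)
      · exact hu x hx y hy
      · simp only [Set.mem_singleton_iff] at hy; subst hy
        exact hsymm (hz x hx)
      · simp only [Set.mem_singleton_iff] at hx; subst hx
        exact hz y hy
      · simp only [Set.mem_singleton_iff] at hx hy; subst hx; subst hy
        exact hrefl _
    have h4 := hw _ h3
    rw [comm3_iff hsymm] at h4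
    have hs : ↑(Finsupp.single z (1 : ZMod 2)).support = ({z} : Set E) := by
      rw [Finsupp.support_single_ne_zero z one_ne_zero]; simp
    exact h4 a (Or.inl ha) z (by rw [hs]; exact Or.inr rfl)

end Basic

section Transfer
variable {E E' : Type*} {R : E → E → Prop} {R' : E' → E' → Prop}

lemma comm3_map (φ : (E →₀ ZMod 2) ≃ₗ[ZMod 2] (E' →₀ ZMod 2))
    (hm : ∀ v, φ v ∈ commc R' ↔ v ∈ commc R) (v w : E →₀ ZMod 2) :
    Comm3 R' (φ v) (φ w) ↔ Comm3 R v w := by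
  unfold Comm3
  rw [hm, hm, ← map_add, hm]

lemma mem_image_linEquiv (φ : (E →₀ ZMod 2) ≃ₗ[ZMod 2] (E' →₀ ZMod 2))
    (S : Set (E →₀ ZMod 2)) (v' : E' →₀ ZMod 2) :
    v' ∈ ⇑φ '' S ↔ φ.symm v' ∈ S := by
  constructor
  · rintro ⟨v, hv, rfl⟩; simpa using hv
  · intro h; exact ⟨φ.symm v', h, by simp⟩

lemma transfer14 (φ : (E →₀ ZMod 2) ≃ₗ[ZMod 2] (E' →₀ ZMod 2))
    (hm : ∀ v, φ v ∈ commc R' ↔ v ∈ commc R)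
    (hsymm : Symmetric R) (hrefl : Reflexive R)
    (hsymm' : Symmetric R') (hrefl' : Reflexive R')
    {u : E →₀ ZMod 2} (hu : u ∈ commc R) :
    ⇑φ '' subOf (Cop R (Cop R ↑u.support)) =
      subOf (Cop R' (Cop R' ↑(φ u).support)) := by
  ext v'
  rw [mem_image_linEquiv, memClosureIff14 hsymm hrefl hu,
    memClosureIff14 hsymm' hrefl' ((hm u).mpr hu)]
  constructor
  · rintro ⟨h1, h2⟩
    constructor
    · rw [← φ.apply_symm_apply v']; exact (hm _).mpr h1
    · intro w' h3
      have h3' : Comm3 R u (φ.symm w') := by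
        apply (comm3_map φ hm u (φ.symm w')).mp
        simpa using h3
      have h4 := (comm3_map φ hm _ _).mpr (h2 _ h3')
      simpa using h4
  · rintro ⟨h1, h2⟩
    constructor
    · rw [← hm]; simpa using h1
    · intro w h3
      have h3' : Comm3 R' (φ u) (φ w) := (comm3_map φ hm u w).mpr h3
      have h4 := h2 _ h3'
      apply (comm3_map φ hm _ w).mp
      simpa using h4

lemma cell_map14 (φ : (E →₀ ZMod 2) ≃ₗ[ZMod 2] (E' →₀ ZMod 2))
    (hm : ∀ v, φ v ∈ commc R' ↔ v ∈ commc R)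
    (hsymm : Symmetric R) (hrefl : Reflexive R)
    (hsymm' : Symmetric R') (hrefl' : Reflexive R')
    (x : E) :
    ∃ b : E', ⇑φ '' subOf (Cop R (Cop R ({x} : Set E))) =
      subOf (Cop R' (Cop R' ({b} : Set E'))) := by
  classical
  set δ : E →₀ ZMod 2 := Finsupp.single x 1 with hδ
  have hδsupp : ↑δ.support = ({x} : Set E) := by
    rw [hδ, Finsupp.support_single_ne_zero x one_ne_zero]; simp
  have hδc : δ ∈ commc R := single_mem_commc hrefl x 1
  have t1 : ⇑φ '' subOf (Cop R (Cop R ({x} : Set E))) =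
      subOf (Cop R' (Cop R' ↑(φ δ).support)) := by
    rw [← hδsupp]; exact transfer14 φ hm hsymm hrefl hsymm' hrefl' hδc
  -- write δ as a sum of preimages of singles
  have hsum : δ = ∑ a ∈ (φ δ).support, φ.symm (Finsupp.single a ((φ δ) a)) := by
    rw [← map_sum]
    have h5 : ∑ a ∈ (φ δ).support, Finsupp.single a ((φ δ) a) = φ δ :=
      Finsupp.sum_single (φ δ)
    rw [h5]; simp
  have hxδ : x ∈ δ.support := by
    rw [Finsupp.mem_support_iff, hδ, Finsupp.single_apply]
    simp
  obtain ⟨b, hbA, hxb⟩ := Finsupp.mem_support_finset_sum x (by rw [← hsum]; exact hxδ)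
  -- b works
  set c : ZMod 2 := (φ δ) b with hc
  have hcne : c ≠ 0 := Finsupp.mem_support_iff.mp hbA
  have hbsupp : ↑(Finsupp.single b c).support = ({b} : Set E') := by
    rw [Finsupp.support_single_ne_zero b hcne]; simp
  -- single b c ∈ [Cop² A'] hence its pullback is supported in the cell of x
  have hbmem : Finsupp.single b c ∈ subOf (Cop R' (Cop R' ↑(φ δ).support)) := by
    intro t ht
    rw [hbsupp] at ht
    simp only [Set.mem_singleton_iff] at ht; subst ht
    exact subset_copcop hsymm' _ hbA
  have hBsub : ↑(φ.symm (Finsupp.single b c)).support ⊆ Cop R (Cop R ({x} : Set E)) := by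
    have := (mem_image_linEquiv φ _ _).mp (t1 ▸ hbmem : Finsupp.single b c ∈
      ⇑φ '' subOf (Cop R (Cop R ({x} : Set E))))
    exact this
  have hxB : x ∈ (φ.symm (Finsupp.single b c)).support := hxb
  -- closure of B equals cell of x
  have hclB : Cop R (Cop R ↑(φ.symm (Finsupp.single b c)).support) =
      Cop R (Cop R ({x} : Set E)) := by
    apply Set.Subset.antisymm
    · have h6 : Cop R (Cop R ↑(φ.symm (Finsupp.single b c)).support) ⊆
          Cop R (Cop R (Cop R (Cop R ({x} : Set E)))) := copcop_mono hBsub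
      rwa [copcopcop hsymm] at h6
    · apply copcop_mono
      intro t ht
      simp only [Set.mem_singleton_iff] at ht
      subst ht
      exact Finset.mem_coe.mpr hxB
  -- transfer in the reverse direction
  have hm' : ∀ v', φ.symm v' ∈ commc R ↔ v' ∈ commc R' := by
    intro v'
    rw [← hm (φ.symm v')]; simp
  have hbc : Finsupp.single b c ∈ commc R' := single_mem_commc hrefl' b c
  have t2 := transfer14 φ.symm hm' hsymm' hrefl' hsymm hrefl hbc
  rw [hbsupp, hclB] at t2
  refine ⟨b, ?_⟩
  rw [← t2, Set.image_image]
  simp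
end Transfer

section Final
variable {E E' : Type*} {R : E → E → Prop} {R' : E' → E' → Prop}

lemma single_mem_subOf_iff {T : Set E} {s : E} :
    Finsupp.single s (1 : ZMod 2) ∈ subOf T ↔ s ∈ T := by
  unfold subOf
  rw [Set.mem_setOf_eq, Finsupp.support_single_ne_zero s one_ne_zero]
  simp

lemma subOf_inj {T₁ T₂ : Set E} (h : subOf T₁ = subOf T₂) : T₁ = T₂ := by
  ext s
  rw [← single_mem_subOf_iff (T := T₁), ← single_mem_subOf_iff (T := T₂), h]

lemma pair_single_mem_subOf {a b : E} {T : Set E} (ha : a ∈ T) (hb : b ∈ T) :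
    (Finsupp.single a (1 : ZMod 2) + Finsupp.single b 1) ∈ subOf T := by
  classical
  intro t ht
  have h1 := Finsupp.support_add (g₁ := Finsupp.single a (1 : ZMod 2))
    (g₂ := Finsupp.single b 1) (by simpa using ht)
  rcases Finset.mem_union.mp h1 with h2 | h2
  · have := Finsupp.support_single_subset h2
    simp only [Finset.mem_singleton] at this; subst this; exact ha
  · have := Finsupp.support_single_subset h2
    simp only [Finset.mem_singleton] at this; subst this; exact hb

lemma pair_commc_rel (hrefl : Reflexive R) {s t : E}
    (hc : (Finsupp.single s (1 : ZMod 2) + Finsupp.single t 1) ∈ commc R) : R s t := by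
  classical
  by_cases hst : s = t
  · subst hst; exact hrefl s
  · have hsupp : ∀ u : E, u = s ∨ u = t →
        u ∈ (Finsupp.single s (1 : ZMod 2) + Finsupp.single t 1).support := by
      rintro u (rfl | rfl) <;>
      · rw [Finsupp.mem_support_iff, Finsupp.add_apply,
          Finsupp.single_apply, Finsupp.single_apply]
        simp [hst, Ne.symm hst]
    exact hc s (hsupp s (Or.inl rfl)) t (hsupp t (Or.inr rfl))

lemma commSet_union_iff (hsymm : Symmetric R) (hrefl : Reflexive R) (T U : Set E) :
    CommSet R (T ∪ U) ↔ ∀ v ∈ subOf T, ∀ w ∈ subOf U, v + w ∈ commc R := by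
  constructor
  · intro h v hv w hw
    apply commSet_mono _ h
    intro a ha
    classical
    have h1 := Finsupp.support_add (g₁ := v) (g₂ := w) (by simpa using ha)
    rcases Finset.mem_union.mp h1 with h2 | h2
    · exact Or.inl (hv h2)
    · exact Or.inr (hw h2)
  · intro h s hs t ht
    have hzT : (0 : E →₀ ZMod 2) ∈ subOf T := by
      intro a ha; simp at ha
    have hzU : (0 : E →₀ ZMod 2) ∈ subOf U := by
      intro a ha; simp at ha
    have hsingT : ∀ a ∈ T, Finsupp.single a (1 : ZMod 2) ∈ subOf T := by
      intro a ha; exact single_mem_subOf_iff.mpr ha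
    have hsingU : ∀ a ∈ U, Finsupp.single a (1 : ZMod 2) ∈ subOf U := by
      intro a ha; exact single_mem_subOf_iff.mpr ha
    rcases hs with hs | hs <;> rcases ht with ht | ht
    · apply pair_commc_rel hrefl
      have := h _ (pair_single_mem_subOf hs ht) _ hzU
      simpa using this
    · exact pair_commc_rel hrefl (h _ (hsingT s hs) _ (hsingU t ht))
    · apply hsymm
      exact pair_commc_rel hrefl (h _ (hsingT t ht) _ (hsingU s hs))
    · apply pair_commc_rel hrefl
      have := h _ hzT _ (pair_single_mem_subOf hs ht)
      simpa using this

lemma comm_union_transfer (φ : (E →₀ ZMod 2) ≃ₗ[ZMod 2] (E' →₀ ZMod 2))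
    (hm : ∀ v, φ v ∈ commc R' ↔ v ∈ commc R)
    (hsymm : Symmetric R) (hrefl : Reflexive R)
    (hsymm' : Symmetric R') (hrefl' : Reflexive R')
    {T U : Set E} {T' U' : Set E'}
    (hT : ⇑φ '' subOf T = subOf T') (hU : ⇑φ '' subOf U = subOf U') :
    CommSet R (T ∪ U) ↔ CommSet R' (T' ∪ U') := by
  rw [commSet_union_iff hsymm hrefl, commSet_union_iff hsymm' hrefl']
  constructor
  · intro h v' hv' w' hw'
    rw [← hT] at hv'; rw [← hU] at hw'
    obtain ⟨v, hv, rfl⟩ := hv'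
    obtain ⟨w, hw, rfl⟩ := hw'
    rw [← map_add, hm]
    exact h v hv w hw
  · intro h v hv w hw
    rw [← hm, map_add]
    exact h _ (hT ▸ ⟨v, hv, rfl⟩) _ (hU ▸ ⟨w, hw, rfl⟩)

end Final


theorem stmt_14 {E E' : Type*} (R : E → E → Prop) (R' : E' → E' → Prop)
    (hsymm : Symmetric R) (hrefl : Reflexive R)
    (hsymm' : Symmetric R') (hrefl' : Reflexive R')
    (φ : (E →₀ ZMod 2) ≃ₗ[ZMod 2] (E' →₀ ZMod 2))
    (hφ : ⇑φ '' commc R = commc R') :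
    (∀ T ∈ cells R, ∃! T' : Set E', T' ∈ cells R' ∧ ⇑φ '' subOf T = subOf T') ∧
    (∃ g : Set E → Set E', Set.BijOn g (cells R) (cells R') ∧
      (∀ T ∈ cells R, ⇑φ '' subOf T = subOf (g T)) ∧
      (∀ T ∈ cells R, ∀ U ∈ cells R,
        (CommSet R (T ∪ U) ↔ CommSet R' (g T ∪ g U)))) := by
  classical
  have hm : ∀ v, φ v ∈ commc R' ↔ v ∈ commc R := by
    intro v
    constructor
    · intro h
      rw [← hφ] at h
      obtain ⟨w, hw, hww⟩ := h
      rwa [← φ.injective hww]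
    · intro h; rw [← hφ]; exact ⟨v, h, rfl⟩
  have hm' : ∀ v', φ.symm v' ∈ commc R ↔ v' ∈ commc R' := fun v' => by
    rw [← hm (φ.symm v')]; simp
  have hex : ∀ T ∈ cells R, ∃ T', T' ∈ cells R' ∧ ⇑φ '' subOf T = subOf T' := by
    rintro T ⟨x, rfl⟩
    obtain ⟨b, hb⟩ := cell_map14 φ hm hsymm hrefl hsymm' hrefl' x
    exact ⟨_, ⟨b, rfl⟩, hb⟩
  have hex' : ∀ T' ∈ cells R', ∃ T, T ∈ cells R ∧ ⇑φ.symm '' subOf T' = subOf T := by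
    rintro T' ⟨b, rfl⟩
    obtain ⟨a, ha⟩ := cell_map14 φ.symm hm' hsymm' hrefl' hsymm hrefl b
    exact ⟨_, ⟨a, rfl⟩, ha⟩
  constructor
  · intro T hT
    obtain ⟨T', hT'c, hT'⟩ := hex T hT
    refine ⟨T', ⟨hT'c, hT'⟩, ?_⟩
    rintro T₂ ⟨hT₂c, hT₂⟩
    exact subOf_inj (by rw [← hT₂, hT'])
  · have H : ∀ T : Set E, ∃ T' : Set E',
        T ∈ cells R → (T' ∈ cells R' ∧ ⇑φ '' subOf T = subOf T') := by
      intro T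
      by_cases hT : T ∈ cells R
      · obtain ⟨T', h1, h2⟩ := hex T hT
        exact ⟨T', fun _ => ⟨h1, h2⟩⟩
      · exact ⟨∅, fun h => absurd h hT⟩
    choose g hg using H
    refine ⟨g, ⟨?_, ?_, ?_⟩, ?_, ?_⟩
    · intro T hT; exact (hg T hT).1
    · intro T₁ h₁ T₂ h₂ heq
      apply subOf_inj
      have e1 := (hg T₁ h₁).2
      have e2 := (hg T₂ h₂).2
      have himg : ⇑φ '' subOf T₁ = ⇑φ '' subOf T₂ := by rw [e1, e2, heq]
      exact Set.image_injective.mpr φ.injective himg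
    · intro T' hT'
      obtain ⟨T, hTc, hT⟩ := hex' T' hT'
      refine ⟨T, hTc, ?_⟩
      apply subOf_inj
      rw [← (hg T hTc).2, ← hT, Set.image_image]
      simp
    · intro T hT; exact (hg T hT).2
    · intro T hT U hU
      exact comm_union_transfer φ hm hsymm hrefl hsymm' hrefl' (hg T hT).2 (hg U hU).2
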